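/- arXiv:1411.1189 — 8 statements merged into one kernel-verified Lean document; each statement's English description precedes it below -/
import Mathlib

section
/- The structure group of a non-degenerate symmetric set-theoretical solution is residually finite, and hence Hopfian. -/
/-- The map `S(x,y) = (g_x(y), f_y(x))` of a set-theoretical solution. -/
def ybS {X : Type*} (g f : X → Equiv.Perm X) : X × X → X × X :=
  fun p => (g p.1 p.2, f p.2 p.1)

/-- `S` acting on the first two components of `X³`. -/
def ybS12 {X : Type*} (g f : X → Equiv.Perm X) : X × X × X → X × X × X :=
  fun t => ((ybS g f (t.1, t.2.1)).1, (ybS g f (t.1, t.2.1)).2, t.2.2)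

/-- `S` acting on the last two components of `X³`. -/
def ybS23 {X : Type*} (g f : X → Equiv.Perm X) : X × X × X → X × X × X :=
  fun t => (t.1, ybS g f (t.2.1, t.2.2))

/-- Relators `x·y·(g_x(y)·f_y(x))⁻¹` of the structure group `G(X,S)`. -/
def structureGroupRels {X : Type*} (g f : X → Equiv.Perm X) : Set (FreeGroup X) :=
  {r | ∃ x y : X, r = FreeGroup.of x * FreeGroup.of y *
    (FreeGroup.of (g x y) * FreeGroup.of (f y x))⁻¹}

/-!
Sending a generator `x` to `(δ_x, g_x)` defines a homomorphism from the structure group into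
`ℤ^X ⋊ Sym(X)`, and it is injective. Indeed, non-degeneracy lets one move inverse generators to
the right, so every element is `a b⁻¹` for positive words `a`, `b`; and two positive words with
the same `ℤ^X`-component are equal, because any letter `y` with nonzero coefficient can be brought
to the front of a word with the relations `x · g_x⁻¹(y) = y · f_{g_x⁻¹(y)}(x)`, after which one
inducts on the length. Reducing the `ℤ^X`-part modulo `N` shows that `ℤ^X ⋊ Sym(X)` is residually
finite, hence so is the structure group; being finitely generated, it is Hopfian by Mal'cev's
argument.
-/

namespace Group

variable {G H : Type*} [Group G] [Group H]

theorem ResiduallyFinite.of_injective [ResiduallyFinite H] {φ : G →* H}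
    (hφ : Function.Injective φ) : ResiduallyFinite G := by
  refine residuallyFinite_iff_forall_finiteIndexNormalSubgroup.2 fun a ha => hφ ?_
  rw [map_one]
  exact eq_one_iff_forall_finiteIndexNormalSubroup _ fun K => ha (K.comap φ)

theorem ResiduallyFinite.exists_monoidHom_ne_one [ResiduallyFinite G] {a : G} (ha : a ≠ 1) :
    ∃ (Q : Type) (_ : Group Q) (_ : Finite Q) (φ : G →* Q), φ a ≠ 1 := by
  obtain ⟨K, hK⟩ := exists_finiteIndexNormalSubgroup_notMem a ha
  obtain ⟨Q, _, _, ⟨e⟩⟩ := Finite.exists_type_univ_nonempty_mulEquiv.{_, 0} (G ⧸ K.toSubgroup)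
  refine ⟨Q, inferInstance, inferInstance, e.toMonoidHom.comp (QuotientGroup.mk' _), ?_⟩
  simpa [FiniteIndexNormalSubgroup.mem_toSubgroup_iff] using hK

instance FG.finite_monoidHom [FG G] [Finite H] : Finite (G →* H) := by
  obtain ⟨S, hS⟩ := fg_def.1 ‹FG G›
  refine Finite.of_injective (fun φ : G →* H => fun s : S => φ s) fun φ ψ h => ?_
  exact MonoidHom.eq_of_eqOn_dense hS fun s hs => congrFun h ⟨s, hs⟩

theorem ResiduallyFinite.injective_of_surjective [FG G] [ResiduallyFinite G] {φ : G →* G}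
    (hφ : Function.Surjective φ) : Function.Injective φ := by
  refine (injective_iff_map_eq_one φ).2 fun a ha => ?_
  refine eq_one_iff_forall_finiteIndexNormalSubroup a fun K => ?_
  -- precomposition with `φ` is an injective self-map of the finite set `Hom(G, G ⧸ K)`
  have hcomp : Function.Surjective fun ψ : G →* G ⧸ K.toSubgroup => ψ.comp φ :=
    Finite.surjective_of_injective fun ψ₁ ψ₂ h =>
      MonoidHom.ext (hφ.forall.2 fun b => DFunLike.congr_fun h b)
  obtain ⟨ψ, hψ⟩ := hcomp (QuotientGroup.mk' K.toSubgroup)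
  rw [← FiniteIndexNormalSubgroup.mem_toSubgroup_iff, ← QuotientGroup.eq_one_iff,
    ← QuotientGroup.mk'_apply, ← hψ, MonoidHom.comp_apply, ha, map_one]

end Group

instance PresentedGroup.fg {α : Type*} [Finite α] (rels : Set (FreeGroup α)) :
    Group.FG (PresentedGroup rels) :=
  Group.fg_of_surjective (PresentedGroup.mk_surjective rels)

theorem Multiplicative.one_lt_ofAdd_one : (1 : Multiplicative ℤ) < ofAdd 1 :=
  ofAdd_lt.2 one_pos

instance Multiplicative.residuallyFinite_int : Group.ResiduallyFinite (Multiplicative ℤ) := by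
  refine Group.residuallyFinite_of_forall_exists_finite_monoidHom fun a ha => ?_
  have ha' : a.toAdd ≠ 0 := ha
  let N := a.toAdd.natAbs + 1
  refine ⟨Multiplicative (ZMod N), inferInstance, inferInstance,
    (Int.castAddHom (ZMod N)).toMultiplicative, fun h => ?_⟩
  have hdvd : (N : ℤ) ∣ a.toAdd := (ZMod.intCast_zmod_eq_zero_iff_dvd _ _).1 (congrArg toAdd h)
  have := Int.natAbs_le_of_dvd_ne_zero hdvd ha'
  omega

theorem mulAutArrow_mulSingle {X M : Type*} [DecidableEq X] [Monoid M] (σ : Equiv.Perm X)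
    (x : X) (m : M) : mulAutArrow σ (Pi.mulSingle x m) = Pi.mulSingle (σ x) m := by
  ext y
  change (Pi.mulSingle x m : X → M) (σ⁻¹ y) = _
  simp [Pi.mulSingle_apply, Equiv.Perm.inv_def, Equiv.symm_apply_eq]

instance SemidirectProduct.residuallyFinite_pi_perm {X M : Type*} [Finite X] [Group M]
    [Group.ResiduallyFinite M] : Group.ResiduallyFinite ((X → M) ⋊[mulAutArrow] Equiv.Perm X) := by
  refine Group.residuallyFinite_of_forall_exists_finite_monoidHom fun a ha => ?_
  by_cases hright : a.right = 1
  · obtain ⟨x, hx⟩ : ∃ x, a.left x ≠ 1 := by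
      by_contra! h
      exact ha (SemidirectProduct.ext (funext h) hright)
    obtain ⟨K, hK⟩ := Group.exists_finiteIndexNormalSubgroup_notMem _ hx
    let π : (X → M) ⋊[mulAutArrow] Equiv.Perm X →*
        (X → M ⧸ K.toSubgroup) ⋊[mulAutArrow] Equiv.Perm X :=
      SemidirectProduct.map ((QuotientGroup.mk' _).compLeft X) (MonoidHom.id _)
        fun _ => MonoidHom.ext fun _ => rfl
    refine ⟨_, inferInstance, Finite.of_equiv _ SemidirectProduct.equivProd.symm, π, fun h => hK ?_⟩
    have := congrFun (congrArg SemidirectProduct.left h) x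
    simpa [π, FiniteIndexNormalSubgroup.mem_toSubgroup_iff] using this
  · refine ⟨ULift (Equiv.Perm X), inferInstance, inferInstance,
      MulEquiv.ulift.symm.toMonoidHom.comp SemidirectProduct.rightHom, ?_⟩
    simpa using hright

abbrev IntWreath (X : Type*) := (X → Multiplicative ℤ) ⋊[mulAutArrow] Equiv.Perm X

section

variable {X : Type*} {g f : X → Equiv.Perm X}

theorem apply_apply_of_involutive (invol : ∀ p : X × X, ybS g f (ybS g f p) = p) (x y : X) :
    g (g x y) (f y x) = x :=
  congrArg Prod.fst (invol (x, y))

theorem mul_eq_mul_of_braid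
    (braid : ybS12 g f ∘ ybS23 g f ∘ ybS12 g f = ybS23 g f ∘ ybS12 g f ∘ ybS23 g f) (x y : X) :
    g x * g y = g (g x y) * g (f y x) :=
  Equiv.ext fun z => (congrArg Prod.fst (congrFun braid (x, y, z))).symm

abbrev StructureGroup (g f : X → Equiv.Perm X) := PresentedGroup (structureGroupRels g f)

namespace StructureGroup

open PresentedGroup Multiplicative

theorem of_mul_of (x y : X) :
    (of x : StructureGroup g f) * of y = of (g x y) * of (f y x) := by
  have := one_of_mem (rels := structureGroupRels g f) ⟨x, y, rfl⟩
  rwa [map_mul, map_inv, mul_inv_eq_one] at this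

variable (g f) in
def ofList (l : List X) : StructureGroup g f := (l.map of).prod

@[simp] theorem ofList_nil : ofList g f [] = 1 := rfl

@[simp] theorem ofList_cons (x : X) (l : List X) : ofList g f (x :: l) = of x * ofList g f l :=
  List.prod_cons

@[simp] theorem ofList_append (l l' : List X) :
    ofList g f (l ++ l') = ofList g f l * ofList g f l' := by
  simp [ofList]

theorem exists_of_inv_mul_ofList (x : X) (l : List X) :
    ∃ l' z, (of x)⁻¹ * ofList g f l = ofList g f l' * (of z)⁻¹ := by
  induction l generalizing x with
  | nil => exact ⟨[], x, by simp⟩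
  | cons a l ih =>
    set b := (g x).symm a
    obtain ⟨l', z, hl'⟩ := ih (f b x)
    have hrel : (of x : StructureGroup g f)⁻¹ * of a = of b * (of (f b x))⁻¹ := by
      have := of_mul_of (g := g) (f := f) x b
      rw [Equiv.apply_symm_apply] at this
      rw [inv_mul_eq_iff_eq_mul, ← mul_assoc, this, mul_inv_cancel_right]
    refine ⟨b :: l', z, ?_⟩
    rw [ofList_cons, ← mul_assoc, hrel, mul_assoc, hl', ofList_cons, mul_assoc]

theorem exists_eq_ofList_mul_inv (u : StructureGroup g f) :
    ∃ A B, u = ofList g f A * (ofList g f B)⁻¹ := by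
  have hu : u ∈ Subgroup.closure (Set.range of) := by simp [closure_range_of]
  induction hu using Subgroup.closure_induction_right with
  | one => exact ⟨[], [], by simp⟩
  | mul_right u _ _ hx ih =>
    obtain ⟨x, rfl⟩ := hx
    obtain ⟨A, B, rfl⟩ := ih
    obtain ⟨B', z, hB'⟩ := exists_of_inv_mul_ofList (g := g) (f := f) x B
    refine ⟨A ++ [z], B', ?_⟩
    rw [mul_assoc, ← inv_inv (of x), ← mul_inv_rev, hB']
    simp [mul_assoc]
  | mul_inv_cancel u _ _ hx ih =>
    obtain ⟨x, rfl⟩ := hx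
    obtain ⟨A, B, rfl⟩ := ih
    exact ⟨A, x :: B, by simp [mul_assoc]⟩

variable [DecidableEq X]

variable (g) in
def wreathGen (x : X) : IntWreath X := ⟨Pi.mulSingle x (ofAdd 1), g x⟩

theorem wreathGen_mul_wreathGen (hinv : ∀ x y, g (g x y) (f y x) = x)
    (hcomp : ∀ x y, g x * g y = g (g x y) * g (f y x)) (x y : X) :
    wreathGen g x * wreathGen g y = wreathGen g (g x y) * wreathGen g (f y x) := by
  refine SemidirectProduct.ext ?_ (hcomp x y)
  simp only [wreathGen, SemidirectProduct.mul_left, mulAutArrow_mulSingle, hinv]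
  exact mul_comm _ _

variable (hinv : ∀ x y, g (g x y) (f y x) = x) (hcomp : ∀ x y, g x * g y = g (g x y) * g (f y x))

def toWreath : StructureGroup g f →* IntWreath X :=
  toGroup (f := wreathGen g) <| by
    rintro _ ⟨x, y, rfl⟩
    rw [map_mul, map_inv, map_mul, map_mul, FreeGroup.lift_apply_of, FreeGroup.lift_apply_of,
      FreeGroup.lift_apply_of, FreeGroup.lift_apply_of, wreathGen_mul_wreathGen hinv hcomp,
      mul_inv_cancel]

theorem toWreath_ofList_cons (x : X) (l : List X) :
    toWreath hinv hcomp (ofList g f (x :: l)) =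
      wreathGen g x * toWreath hinv hcomp (ofList g f l) := by
  rw [ofList_cons, map_mul, toWreath, toGroup.of]

theorem toWreath_ofList_cons_left_apply (x : X) (l : List X) (y : X) :
    (toWreath hinv hcomp (ofList g f (x :: l))).left y =
      (Pi.mulSingle x (ofAdd 1) : X → Multiplicative ℤ) y *
        (toWreath hinv hcomp (ofList g f l)).left ((g x).symm y) := by
  rw [toWreath_ofList_cons]
  rfl

theorem one_le_toWreath_ofList_left (l : List X) (y : X) :
    1 ≤ (toWreath hinv hcomp (ofList g f l)).left y := by
  induction l generalizing y with
  | nil => exact le_rfl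
  | cons x l ih =>
    rw [toWreath_ofList_cons_left_apply]
    refine one_le_mul ?_ (ih _)
    rw [Pi.mulSingle_apply]
    split_ifs
    exacts [one_lt_ofAdd_one.le, le_rfl]

theorem toWreath_ofList_cons_left_self_ne_one (x : X) (l : List X) :
    (toWreath hinv hcomp (ofList g f (x :: l))).left x ≠ 1 := by
  rw [toWreath_ofList_cons_left_apply, Pi.mulSingle_eq_same]
  exact (one_lt_mul_of_lt_of_le' one_lt_ofAdd_one
    (one_le_toWreath_ofList_left hinv hcomp l _)).ne'

theorem exists_ofList_eq_cons (l : List X) (y : X)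
    (hy : (toWreath hinv hcomp (ofList g f l)).left y ≠ 1) :
    ∃ c, ofList g f l = ofList g f (y :: c) := by
  induction l generalizing y with
  | nil => exact absurd rfl hy
  | cons x l ih =>
    by_cases hyx : y = x
    · exact ⟨l, by rw [hyx]⟩
    rw [toWreath_ofList_cons_left_apply, Pi.mulSingle_eq_of_ne hyx, one_mul] at hy
    obtain ⟨c, hc⟩ := ih _ hy
    refine ⟨f ((g x).symm y) x :: c, ?_⟩
    rw [ofList_cons, hc, ofList_cons, ← mul_assoc, of_mul_of, Equiv.apply_symm_apply,
      ofList_cons, ofList_cons, mul_assoc]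

theorem ofList_eq_of_toWreath_left_eq (a b : List X)
    (h : (toWreath hinv hcomp (ofList g f a)).left = (toWreath hinv hcomp (ofList g f b)).left) :
    ofList g f a = ofList g f b := by
  induction b generalizing a with
  | nil =>
    cases a with
    | nil => rfl
    | cons x a =>
      exact absurd (congrFun h x) (toWreath_ofList_cons_left_self_ne_one hinv hcomp x a)
  | cons y b ih =>
    obtain ⟨c, hc⟩ := exists_ofList_eq_cons hinv hcomp a y
      (congrFun h y ▸ toWreath_ofList_cons_left_self_ne_one hinv hcomp y b)
    rw [hc, toWreath_ofList_cons, toWreath_ofList_cons, SemidirectProduct.mul_left,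
      SemidirectProduct.mul_left, mul_left_cancel_iff] at h
    rw [hc, ofList_cons, ofList_cons, ih c ((mulAutArrow _).injective h)]

theorem toWreath_injective : Function.Injective (toWreath hinv hcomp) := by
  refine (injective_iff_map_eq_one _).2 fun u hu => ?_
  obtain ⟨A, B, rfl⟩ := exists_eq_ofList_mul_inv u
  rw [map_mul, map_inv, mul_inv_eq_one] at hu
  rw [ofList_eq_of_toWreath_left_eq hinv hcomp A B (congrArg SemidirectProduct.left hu),
    mul_inv_cancel]

end StructureGroup

end

/-- The structure group of a non-degenerate symmetric (involutive
and braided) set-theoretical solution on a finite set is residually finite, and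
hence Hopfian. -/
theorem stmt_0 {X : Type*} [Fintype X] (g f : X → Equiv.Perm X)
    (invol : ∀ p : X × X, ybS g f (ybS g f p) = p)
    (braid : ybS12 g f ∘ ybS23 g f ∘ ybS12 g f = ybS23 g f ∘ ybS12 g f ∘ ybS23 g f) :
    (∀ a : PresentedGroup (structureGroupRels g f), a ≠ 1 →
      ∃ (Q : Type) (_ : Group Q) (_ : Finite Q)
        (φ : PresentedGroup (structureGroupRels g f) →* Q), φ a ≠ 1) ∧
    (∀ φ : PresentedGroup (structureGroupRels g f) →*
        PresentedGroup (structureGroupRels g f),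
      Function.Surjective φ → Function.Injective φ) := by
  classical
  have : Group.ResiduallyFinite (PresentedGroup (structureGroupRels g f)) :=
    .of_injective <| StructureGroup.toWreath_injective
      (apply_apply_of_involutive invol) (mul_eq_mul_of_braid braid)
  exact ⟨fun _ => Group.ResiduallyFinite.exists_monoidHom_ne_one,
    fun _ => Group.ResiduallyFinite.injective_of_surjective⟩
end

section
/- Let (X,S) be a non-degenerate involutive set-theoretical solution with S(x,y) = (g_x(y), f_y(x)). Define T: X → X by T(x) = f_x^{-1}(x). Then T is invertible with inverse T^{-1}(y) = g_y^{-1}(y). -/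
/- For `u = f_x⁻¹(x)` the hypothesis at `(u, x)` reads `f_x(g_u(x)) = x = f_x(u)`, so `g_u(x) = u`. -/
theorem leftInverse_inv_apply_self {X : Type*} (f g : X → Equiv.Perm X)
    (h : ∀ x y : X, f (f y x) (g x y) = y) :
    Function.LeftInverse (fun y : X => (g y)⁻¹ y) (fun x : X => (f x)⁻¹ x) := by
  intro x
  set u := (f x)⁻¹ x
  have hu : f x u = x := (f x).apply_symm_apply x
  have hgu : g u x = u := (f x).injective (by simpa only [hu] using h u x)
  exact Equiv.Perm.inv_eq_iff_eq.2 hgu.symm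

theorem stmt_2_general {X : Type*} (g f : X → Equiv.Perm X)
    (invol : ∀ x y : X, (g (g x y) (f y x), f (f y x) (g x y)) = (x, y)) :
    Function.Bijective (fun x : X => (f x)⁻¹ x) ∧
      Function.LeftInverse (fun y : X => (g y)⁻¹ y) (fun x : X => (f x)⁻¹ x) ∧
      Function.RightInverse (fun y : X => (g y)⁻¹ y) (fun x : X => (f x)⁻¹ x) := by
  have hL := leftInverse_inv_apply_self f g fun x y => congrArg Prod.snd (invol x y)
  -- The first component of involutivity is the second one with `f`, `g` and the arguments swapped.
  have hR := leftInverse_inv_apply_self g f fun x y => congrArg Prod.fst (invol y x)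
  exact ⟨⟨hL.injective, hR.surjective⟩, hL, hR⟩

/-- For a non-degenerate involutive set-theoretical solution
`S(x,y) = (g_x(y), f_y(x))` on a finite set `X`, the map `T(x) = f_x⁻¹(x)` is
invertible with inverse `y ↦ g_y⁻¹(y)`. Non-degeneracy is encoded by taking
`f g : X → Equiv.Perm X`. -/
theorem stmt_2 {X : Type*} [Fintype X] (g f : X → Equiv.Perm X)
    (invol : ∀ x y : X, (g (g x y) (f y x), f (f y x) (g x y)) = (x, y)) :
    Function.Bijective (fun x : X => (f x)⁻¹ x) ∧
      Function.LeftInverse (fun y : X => (g y)⁻¹ y) (fun x : X => (f x)⁻¹ x) ∧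
      Function.RightInverse (fun y : X => (g y)⁻¹ y) (fun x : X => (f x)⁻¹ x) :=
  stmt_2_general g f invol
end

section
/- Let (X,S) be a non-degenerate involutive solution. For every x ∈ X, S(x, T^{-1}(x)) = (x, T^{-1}(x)) and S(T(x), x) = (T(x), x), where T(x)=f_x^{-1}(x) and T^{-1}(x)=g_x^{-1}(x). -/
/-
The first coordinate of `S (S (x, y)) = (x, y)` reads `g_{g_x y} (f_y x) = x`. So if `g_x y = x`,
then `g_x (f_y x) = x = g_x y`, and injectivity of `g_x` gives `f_y x = y`; symmetrically the second
coordinate shows that `f_y x = y` forces `g_x y = x`. The pairs `(x, T⁻¹ x)` and `(T x, x)` are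
built to satisfy `g_x y = x` resp. `f_y x = y`.
-/

theorem f_apply_eq_of_g_apply_eq {X : Type*} (g f : X → Equiv.Perm X)
    (invol : ∀ x y : X, (g (g x y) (f y x), f (f y x) (g x y)) = (x, y))
    {x y : X} (h : g x y = x) : f y x = y :=
  (g x).injective <| by simpa [h] using congrArg Prod.fst (invol x y)

theorem g_apply_eq_of_f_apply_eq {X : Type*} (g f : X → Equiv.Perm X)
    (invol : ∀ x y : X, (g (g x y) (f y x), f (f y x) (g x y)) = (x, y))
    {x y : X} (h : f y x = y) : g x y = x :=
  (f y).injective <| by simpa [h] using congrArg Prod.snd (invol x y)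

theorem stmt_4_general {X : Type*} (g f : X → Equiv.Perm X)
    (invol : ∀ x y : X, (g (g x y) (f y x), f (f y x) (g x y)) = (x, y)) :
    ∀ x : X,
      (g x ((g x)⁻¹ x), f ((g x)⁻¹ x) x) = (x, (g x)⁻¹ x) ∧
      (g ((f x)⁻¹ x) x, f x ((f x)⁻¹ x)) = ((f x)⁻¹ x, x) := by
  intro x
  have hg : g x ((g x)⁻¹ x) = x := (g x).apply_symm_apply x
  have hf : f x ((f x)⁻¹ x) = x := (f x).apply_symm_apply x
  exact ⟨by rw [hg, f_apply_eq_of_g_apply_eq g f invol hg],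
    by rw [hf, g_apply_eq_of_f_apply_eq g f invol hf]⟩

/-- For a non-degenerate involutive solution `S(x,y)=(g_x(y),f_y(x))`,
for every `x ∈ X` one has `S(x, T⁻¹(x)) = (x, T⁻¹(x))` and `S(T(x), x) = (T(x), x)`,
where `T(x) = f_x⁻¹(x)` and `T⁻¹(x) = g_x⁻¹(x)`. -/
theorem stmt_4 {X : Type*} [Fintype X] (g f : X → Equiv.Perm X)
    (invol : ∀ x y : X, (g (g x y) (f y x), f (f y x) (g x y)) = (x, y)) :
    ∀ x : X,
      (g x ((g x)⁻¹ x), f ((g x)⁻¹ x) x) = (x, (g x)⁻¹ x) ∧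
      (g ((f x)⁻¹ x) x, f x ((f x)⁻¹ x)) = ((f x)⁻¹ x, x) :=
  stmt_4_general g f invol
end

section
/- If a non-degenerate involutive solution (X,S) is of class m, then T^m(x) = x for all x ∈ X. -/
/-- If a non-degenerate involutive solution `(X,S)` is of class `m`
(i.e. `f_x ∘ f_{T(x)} ∘ ⋯ ∘ f_{T^{m-1}(x)} = Id` for all `x`, with `T(x)=f_x⁻¹(x)`),
then `T^m(x) = x` for all `x ∈ X`. -/
theorem stmt_6 {X : Type*} [Fintype X] (g f : X → Equiv.Perm X)
    (invol : ∀ x y : X, (g (g x y) (f y x), f (f y x) (g x y)) = (x, y))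
    (T : X → X) (hT : ∀ x : X, T x = (f x)⁻¹ x) (m : ℕ)
    (hclass : ∀ x : X, ((List.range m).map (fun i => f (T^[i] x))).prod = 1) :
    ∀ x : X, T^[m] x = x := by
  have key : ∀ (k : ℕ) (x : X),
      T^[k] x = (((List.range k).map (fun i => f (T^[i] x))).prod)⁻¹ x := by
    intro k
    induction k with
    | zero => intro x; simp
    | succ k ih =>
      intro x
      rw [Function.iterate_succ_apply', ih x, hT, List.range_succ, List.map_append,
        List.prod_append]
      simp [mul_inv_rev, ih x]
  intro x
  rw [key m x, hclass x]
  simp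
end

section
/- Let π: G → Z^n be a bijective 1-cocycle for a left action • of G on Z^n by automorphisms, and let σ ∈ Aut(Z^n). Define φ = π^{-1} ∘ σ ∘ π. Then φ is a group homomorphism of G if and only if σ(g^{-1} • u) = (φ(g))^{-1} • σ(u) for all g ∈ G and u ∈ Z^n. -/
/-- Let `π : G → ℤⁿ` be a bijective 1-cocycle for a left action `ρ`
of `G` on `ℤⁿ` by automorphisms, and let `σ ∈ Aut(ℤⁿ)`. Define
`φ = π⁻¹ ∘ σ ∘ π`. Then `φ` is a group homomorphism of `G` iff
`σ(g⁻¹ • u) = (φ(g))⁻¹ • σ(u)` for all `g ∈ G`, `u ∈ ℤⁿ`. -/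
theorem stmt_8 {G : Type*} [Group G] (n : ℕ)
    (ρ : G →* MulAut (Multiplicative (Fin n → ℤ)))
    (π : G ≃ Multiplicative (Fin n → ℤ))
    (hπ1 : π 1 = 1)
    (hcoc : ∀ a b : G, π (a * b) = ρ b⁻¹ (π a) * π b)
    (σ : MulAut (Multiplicative (Fin n → ℤ))) :
    (∀ a b : G, π.symm (σ (π (a * b))) = π.symm (σ (π a)) * π.symm (σ (π b))) ↔
      (∀ (g : G) (u : Multiplicative (Fin n → ℤ)),
        σ (ρ g⁻¹ u) = ρ (π.symm (σ (π g)))⁻¹ (σ u)) := by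
  constructor
  · intro h g u
    obtain ⟨a, rfl⟩ := π.surjective u
    have h2 : σ (π (a * g)) = σ (ρ g⁻¹ (π a)) * σ (π g) := by
      rw [hcoc a g, map_mul]
    have h3 : σ (π (a * g)) =
        ρ (π.symm (σ (π g)))⁻¹ (σ (π a)) * σ (π g) := by
      have := congrArg π (h a g)
      rw [Equiv.apply_symm_apply, hcoc (π.symm (σ (π a))) (π.symm (σ (π g))),
        Equiv.apply_symm_apply, Equiv.apply_symm_apply] at this
      exact this
    exact mul_right_cancel (h2.symm.trans h3)
  · intro h a b
    apply π.injective
    rw [Equiv.apply_symm_apply, hcoc a b,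
      hcoc (π.symm (σ (π a))) (π.symm (σ (π b))), Equiv.apply_symm_apply,
      Equiv.apply_symm_apply, map_mul, h b]
end

section
/- Let (X,S) be a non-degenerate involutive solution of class m with bijective 1-cocycle π: G(X,S) → Z^X satisfying π(x) = t_x for x ∈ X. For x ∈ X with t = π(x) and ℓ > 0, π^{-1}(t^ℓ) = T^{ℓ-1}(x)·T^{ℓ-2}(x)⋯T(x)·x in G(X,S). -/
/-- The generator `t_x` of `ℤ^X` (written multiplicatively). -/
def tgen {X : Type*} [DecidableEq X] (x : X) : Multiplicative (X → ℤ) :=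
  Multiplicative.ofAdd (Pi.single x 1)

/-- Let `(X,S)` be a non-degenerate involutive solution of class
`m`, with structure group `G(X,S)` and bijective 1-cocycle
`π : G(X,S) → ℤ^X` satisfying `π(x) = t_x` for `x ∈ X`, for the left action `ρ`
extending `x ↦ f_x⁻¹` (so `ρ(x)` sends `t_y ↦ t_{f_x⁻¹(y)}`, i.e. acts on
exponent vectors by `v ↦ v ∘ f_x`). Then for `x ∈ X` with `t = π(x)` and
`ℓ > 0`, `π⁻¹(t^ℓ) = T^{ℓ-1}(x)·T^{ℓ-2}(x)⋯T(x)·x` in `G(X,S)`, where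
`T(x) = f_x⁻¹(x)`. -/
theorem stmt_16 {X : Type*} [Fintype X] [DecidableEq X]
    (g f : X → Equiv.Perm X)
    (invol : ∀ x y : X, (g (g x y) (f y x), f (f y x) (g x y)) = (x, y))
    (T : X → X) (hT : ∀ x : X, T x = (f x)⁻¹ x) (m : ℕ)
    (hclass : ∀ x : X, ((List.range m).map (fun i => f (T^[i] x))).prod = 1)
    (ρ : PresentedGroup (structureGroupRels g f) →* MulAut (Multiplicative (X → ℤ)))
    (hρ : ∀ (x : X) (v : Multiplicative (X → ℤ)),
      ρ (PresentedGroup.of x) v =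
        Multiplicative.ofAdd (fun y => Multiplicative.toAdd v (f x y)))
    (π : PresentedGroup (structureGroupRels g f) ≃ Multiplicative (X → ℤ))
    (hπ1 : π 1 = 1)
    (hπx : ∀ x : X, π (PresentedGroup.of x) = tgen x)
    (hcoc : ∀ a b : PresentedGroup (structureGroupRels g f),
      π (a * b) = ρ b⁻¹ (π a) * π b) :
    ∀ (x : X) (ℓ : ℕ), 0 < ℓ →
      π.symm (tgen x ^ ℓ) =
        (((List.range ℓ).reverse).map
          (fun i => (PresentedGroup.of (T^[i] x) :
            PresentedGroup (structureGroupRels g f)))).prod := by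
  intro x ℓ _
  -- auxiliary: action of inverse generators on `tgen`
  have hρinv : ∀ (a y : X),
      ρ (PresentedGroup.of a : PresentedGroup (structureGroupRels g f))⁻¹ (tgen y)
        = tgen (f a y) := by
    intro a y
    have h1 : ρ (PresentedGroup.of a : PresentedGroup (structureGroupRels g f))
        (tgen (f a y)) = tgen y := by
      rw [hρ a (tgen (f a y))]
      unfold tgen
      congr 1
      funext z
      simp only [toAdd_ofAdd]
      rw [Pi.single_apply, Pi.single_apply]
      simp [(f a).injective.eq_iff]
    rw [map_inv, ← h1]
    exact MulAut.inv_apply_self (M := Multiplicative (X → ℤ)) (ρ (PresentedGroup.of a)) (tgen (f a y))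
  -- main induction
  set P : X → ℕ → PresentedGroup (structureGroupRels g f) := fun x ℓ =>
    (((List.range ℓ).reverse).map
      (fun i => (PresentedGroup.of (T^[i] x) :
        PresentedGroup (structureGroupRels g f)))).prod with hP
  have hPsucc : ∀ (x : X) (n : ℕ),
      P x (n+1) = PresentedGroup.of (T^[n] x) * P x n := by
    intro x n
    simp [hP, List.range_succ]
  have main : ∀ (n : ℕ),
      π (P x n) = tgen x ^ n ∧ ρ (P x n)⁻¹ (tgen (T^[n] x)) = tgen x := by
    intro n
    induction n with
    | zero => simp [hP, hπ1]
    | succ n ih =>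
      obtain ⟨ih1, ih2⟩ := ih
      have hstep : ρ (PresentedGroup.of (T^[n] x) :
          PresentedGroup (structureGroupRels g f))⁻¹ (tgen (T^[n+1] x))
            = tgen (T^[n] x) := by
        have : T^[n+1] x = (f (T^[n] x))⁻¹ (T^[n] x) := by
          rw [Function.iterate_succ_apply', hT]
        rw [this, hρinv]
        simp
      constructor
      · rw [hPsucc, hcoc, ih1, hπx, ih2, pow_succ']
      · rw [hPsucc, mul_inv_rev, map_mul]
        show ρ (P x n)⁻¹ (ρ (PresentedGroup.of (T^[n] x))⁻¹ (tgen (T^[n+1] x))) = _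
        rw [hstep, ih2]
  rw [Equiv.symm_apply_eq]
  exact (main ℓ).1.symm
end

section
/- Let (X,S) be a non-degenerate involutive solution of class m. For x ∈ X with t = π(x), the element π^{-1}(t^m) is the frozen element θ = T^{m-1}(x)·T^{m-2}(x)⋯T(x)·x of length m ending with x, and both π^{-1}(t^m) and π^{-1}(t^{-m}) act trivially on Z^X; moreover π^{-1}(t^{-m}) = θ^{-1}. -/
open Multiplicative

def IsOneCocycle {G A : Type*} [Group G] [Group A] (ρ : G →* MulAut A) (π : G → A) : Prop :=
  ∀ a b, π (a * b) = ρ b⁻¹ (π a) * π b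

namespace IsOneCocycle

variable {G A : Type*} [Group G] [Group A] {ρ : G →* MulAut A} {π : G → A}

theorem map_one (hπ : IsOneCocycle ρ π) : π 1 = 1 := by
  have h := hπ 1 1
  rw [mul_one, inv_one, _root_.map_one, MulAut.one_apply] at h
  exact mul_eq_left.mp h.symm

theorem map_inv (hπ : IsOneCocycle ρ π) (b : G) : π b⁻¹ = ρ b (π b)⁻¹ := by
  have h := hπ b⁻¹ b
  rw [inv_mul_cancel, hπ.map_one] at h
  rw [← eq_inv_of_mul_eq_one_left h.symm, ← MulAut.mul_apply, ← _root_.map_mul, mul_inv_cancel,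
    _root_.map_one, MulAut.one_apply]

theorem map_inv_of_act_eq_one (hπ : IsOneCocycle ρ π) {b : G} (hb : ρ b = 1) :
    π b⁻¹ = (π b)⁻¹ := by
  rw [hπ.map_inv, hb, MulAut.one_apply]

theorem map_mul_of_act_eq (hπ : IsOneCocycle ρ π) {a b : G} {c : A} (h : ρ b c = π a) :
    π (a * b) = c * π b := by
  rw [hπ a b, ← h, ← MulAut.mul_apply, ← _root_.map_mul, inv_mul_cancel, _root_.map_one,
    MulAut.one_apply]

end IsOneCocycle

section Orbit

variable {X G : Type*} [Group G] (f : X → Equiv.Perm X) (ι : X → G) (T : X → X) (x : X)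

def orbitWord (k : ℕ) : G :=
  ((List.range k).reverse.map fun i => ι (T^[i] x)).prod

def orbitPerm (k : ℕ) : Equiv.Perm X :=
  ((List.range k).map fun i => f (T^[i] x)).prod

theorem orbitWord_succ (k : ℕ) :
    orbitWord ι T x (k + 1) = ι (T^[k] x) * orbitWord ι T x k := by
  simp [orbitWord, List.range_succ]

theorem orbitPerm_succ (k : ℕ) :
    orbitPerm f T x (k + 1) = orbitPerm f T x k * f (T^[k] x) := by
  simp [orbitPerm, List.range_succ]

variable {f}

theorem orbitPerm_apply_iterate (hT : ∀ y, f y (T y) = y) (k : ℕ) :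
    orbitPerm f T x k (T^[k] x) = x := by
  induction k with
  | zero => rfl
  | succ k ih =>
    rw [orbitPerm_succ, Equiv.Perm.mul_apply, Function.iterate_succ_apply', hT, ih]

variable {ι} {ρ : G →* MulAut (Multiplicative (X → ℤ))}
  (hρ : ∀ (y : X) (v : Multiplicative (X → ℤ)), ρ (ι y) v = ofAdd (fun z => toAdd v (f y z)))
include hρ

theorem act_orbitWord (k : ℕ) (v : Multiplicative (X → ℤ)) :
    ρ (orbitWord ι T x k) v = ofAdd (fun z => toAdd v (orbitPerm f T x k z)) := by
  induction k generalizing v with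
  | zero => simp [orbitWord, orbitPerm]
  | succ k ih =>
    rw [orbitWord_succ, map_mul, MulAut.mul_apply, hρ, ih, orbitPerm_succ]
    rfl

theorem act_orbitWord_eq_one {k : ℕ} (hk : orbitPerm f T x k = 1) :
    ρ (orbitWord ι T x k) = 1 := by
  ext v
  rw [act_orbitWord T x hρ, hk]
  rfl

variable [DecidableEq X] (hT : ∀ y, f y (T y) = y)
include hT

theorem act_orbitWord_tgen (k : ℕ) : ρ (orbitWord ι T x k) (tgen x) = tgen (T^[k] x) := by
  rw [act_orbitWord T x hρ, tgen, tgen, toAdd_ofAdd]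
  congr 1
  rw [← Function.comp_def, Pi.single_comp_equiv,
    (Equiv.symm_apply_eq _).mpr (orbitPerm_apply_iterate T x hT k).symm]

theorem IsOneCocycle.map_orbitWord {π : G → Multiplicative (X → ℤ)} (hπ : IsOneCocycle ρ π)
    (hπι : ∀ y, π (ι y) = tgen y) (k : ℕ) : π (orbitWord ι T x k) = tgen x ^ k := by
  induction k with
  | zero => simpa [orbitWord] using hπ.map_one
  | succ k ih =>
    rw [orbitWord_succ, hπ.map_mul_of_act_eq ((act_orbitWord_tgen T x hρ hT k).trans (hπι _).symm),
      ih, pow_succ']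

end Orbit

theorem stmt_17_general {X : Type*} [DecidableEq X]
    (g f : X → Equiv.Perm X)
    (T : X → X) (hT : ∀ x : X, T x = (f x)⁻¹ x) (m : ℕ)
    (hclass : ∀ x : X, ((List.range m).map (fun i => f (T^[i] x))).prod = 1)
    (ρ : PresentedGroup (structureGroupRels g f) →* MulAut (Multiplicative (X → ℤ)))
    (hρ : ∀ (x : X) (v : Multiplicative (X → ℤ)),
      ρ (PresentedGroup.of x) v =
        Multiplicative.ofAdd (fun y => Multiplicative.toAdd v (f x y)))
    (π : PresentedGroup (structureGroupRels g f) ≃ Multiplicative (X → ℤ))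
    (hπx : ∀ x : X, π (PresentedGroup.of x) = tgen x)
    (hcoc : ∀ a b : PresentedGroup (structureGroupRels g f),
      π (a * b) = ρ b⁻¹ (π a) * π b) :
    ∀ x : X,
      π.symm (tgen x ^ m) =
        (((List.range m).reverse).map
          (fun i => (PresentedGroup.of (T^[i] x) :
            PresentedGroup (structureGroupRels g f)))).prod ∧
      ρ (π.symm (tgen x ^ m)) = 1 ∧
      ρ (π.symm (tgen x ^ (-(m : ℤ)))) = 1 ∧
      π.symm (tgen x ^ (-(m : ℤ))) =
        ((((List.range m).reverse).map
          (fun i => (PresentedGroup.of (T^[i] x) :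
            PresentedGroup (structureGroupRels g f)))).prod)⁻¹ := by
  intro x
  have hfT : ∀ y, f y (T y) = y := fun y => by rw [hT, Equiv.Perm.coe_inv, Equiv.apply_symm_apply]
  have hπθ : π (orbitWord PresentedGroup.of T x m) = tgen x ^ m :=
    IsOneCocycle.map_orbitWord T x hρ hfT hcoc hπx m
  have hρθ : ρ (orbitWord PresentedGroup.of T x m) = 1 := act_orbitWord_eq_one T x hρ (hclass x)
  have hθ : π.symm (tgen x ^ m) = orbitWord PresentedGroup.of T x m :=
    π.symm_apply_eq.mpr hπθ.symm
  have hθinv : π.symm (tgen x ^ (-(m : ℤ))) = (orbitWord PresentedGroup.of T x m)⁻¹ := by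
    rw [zpow_neg, zpow_natCast, π.symm_apply_eq,
      IsOneCocycle.map_inv_of_act_eq_one hcoc hρθ, hπθ]
  refine ⟨hθ, ?_, ?_, hθinv⟩
  · rw [hθ, hρθ]
  · rw [hθinv, map_inv, hρθ, inv_one]

/-- Let `(X,S)` be a non-degenerate involutive solution of class
`m` with structure group `G(X,S)`, bijective 1-cocycle `π` and action `ρ` as in
the Etingof–Schedler–Soloviev correspondence. For `x ∈ X` with `t = π(x)`, the
element `π⁻¹(t^m)` is the frozen element `θ = T^{m-1}(x)⋯T(x)·x` of length `m`
ending with `x`; both `π⁻¹(t^m)` and `π⁻¹(t^{-m})` act trivially on `ℤ^X`; and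
`π⁻¹(t^{-m}) = θ⁻¹`. -/
theorem stmt_17 {X : Type*} [Fintype X] [DecidableEq X]
    (g f : X → Equiv.Perm X)
    (invol : ∀ x y : X, (g (g x y) (f y x), f (f y x) (g x y)) = (x, y))
    (T : X → X) (hT : ∀ x : X, T x = (f x)⁻¹ x) (m : ℕ)
    (hclass : ∀ x : X, ((List.range m).map (fun i => f (T^[i] x))).prod = 1)
    (ρ : PresentedGroup (structureGroupRels g f) →* MulAut (Multiplicative (X → ℤ)))
    (hρ : ∀ (x : X) (v : Multiplicative (X → ℤ)),
      ρ (PresentedGroup.of x) v =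
        Multiplicative.ofAdd (fun y => Multiplicative.toAdd v (f x y)))
    (π : PresentedGroup (structureGroupRels g f) ≃ Multiplicative (X → ℤ))
    (hπ1 : π 1 = 1)
    (hπx : ∀ x : X, π (PresentedGroup.of x) = tgen x)
    (hcoc : ∀ a b : PresentedGroup (structureGroupRels g f),
      π (a * b) = ρ b⁻¹ (π a) * π b) :
    ∀ x : X,
      π.symm (tgen x ^ m) =
        (((List.range m).reverse).map
          (fun i => (PresentedGroup.of (T^[i] x) :
            PresentedGroup (structureGroupRels g f)))).prod ∧
      ρ (π.symm (tgen x ^ m)) = 1 ∧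
      ρ (π.symm (tgen x ^ (-(m : ℤ)))) = 1 ∧
      π.symm (tgen x ^ (-(m : ℤ))) =
        ((((List.range m).reverse).map
          (fun i => (PresentedGroup.of (T^[i] x) :
            PresentedGroup (structureGroupRels g f)))).prod)⁻¹ :=
  stmt_17_general g f T hT m hclass ρ hρ π hπx hcoc
end

section
/- Let G and W be groups, π: G → Z^n a bijective 1-cocycle for a left action • of G on Z^n, N ⊴ G a normal subgroup acting trivially on Z^n such that π(N) is a subgroup of Z^n. Then the induced map π̃: G/N → Z^n/π(N), π̃(aN) = π(a)·π(N), is a well-defined bijective 1-cocycle for the induced action of G/N on Z^n/π(N). -/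
/-- Let `π : G → ℤⁿ` be a bijective 1-cocycle for a left action `ρ`
of `G` on `ℤⁿ`, and `N ⊴ G` a normal subgroup acting trivially on `ℤⁿ` such that
`π(N)` is a (`G`-invariant) subgroup `P` of `ℤⁿ`. Then the induced map
`π̃ : G/N → ℤⁿ/P`, `π̃(aN) = π(a)·P`, is a well-defined bijective 1-cocycle for
the induced action. -/
theorem stmt_18 {G : Type*} [Group G] (n : ℕ)
    (ρ : G →* MulAut (Multiplicative (Fin n → ℤ)))
    (π : G ≃ Multiplicative (Fin n → ℤ))
    (hπ1 : π 1 = 1)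
    (hcoc : ∀ a b : G, π (a * b) = ρ b⁻¹ (π a) * π b)
    (N : Subgroup G) (hNnormal : N.Normal)
    (hNtriv : ∀ g ∈ N, ρ g = 1)
    (P : Subgroup (Multiplicative (Fin n → ℤ)))
    (hP : (P : Set (Multiplicative (Fin n → ℤ))) = π '' N)
    (hPinv : ∀ (g : G), ∀ u ∈ P, ρ g u ∈ P) :
    ∃ πt : (G ⧸ N) ≃ (Multiplicative (Fin n → ℤ) ⧸ P),
      (∀ a : G, πt (↑a) = ↑(π a)) ∧
      (∀ a b : G, πt ((↑a : G ⧸ N) * ↑b) =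
        (↑(ρ b⁻¹ (π a)) : Multiplicative (Fin n → ℤ) ⧸ P) * ↑(π b)) := by
  -- key: π maps N-cosets to P-cosets
  have key : ∀ a c : G, c ∈ N → π (a * c) = π a * π c := by
    intro a c hc
    have : ρ c⁻¹ = 1 := hNtriv c⁻¹ (N.inv_mem hc)
    rw [hcoc a c, this]; rfl
  let f : G ⧸ N → Multiplicative (Fin n → ℤ) ⧸ P :=
    Quotient.map' π (by
      intro a b h
      have h' : a⁻¹ * b ∈ N := (QuotientGroup.leftRel_apply).1 h
      have hb : b = a * (a⁻¹ * b) := by group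
      have hpb : π b = π a * π (a⁻¹ * b) := by conv_lhs => rw [hb, key a _ h']
      refine (QuotientGroup.leftRel_apply).2 ?_
      rw [hpb]
      have : (π (a⁻¹ * b) : Multiplicative (Fin n → ℤ)) ∈ (P : Set _) := by
        rw [hP]; exact ⟨_, h', rfl⟩
      simpa using this)
  have hf : ∀ a : G, f (↑a) = ↑(π a) := fun a => rfl
  have hinj : Function.Injective f := by
    intro x y
    induction x using QuotientGroup.induction_on with | H a =>
    induction y using QuotientGroup.induction_on with | H b =>
    intro h
    rw [hf, hf] at h
    have hmem : (π a)⁻¹ * π b ∈ P := (QuotientGroup.eq).1 h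
    have : ((π a)⁻¹ * π b : Multiplicative (Fin n → ℤ)) ∈ (P : Set _) := hmem
    rw [hP] at this
    obtain ⟨c, hc, hpc⟩ := this
    have : π (a * c) = π b := by
      rw [key a c hc, hpc]; group
    have hb : a * c = b := π.injective this
    refine (QuotientGroup.eq).2 ?_
    rw [← hb]; simpa using hc
  have hsurj : Function.Surjective f := by
    intro y
    induction y using QuotientGroup.induction_on with | H u =>
    exact ⟨↑(π.symm u), by rw [hf, π.apply_symm_apply]⟩
  refine ⟨Equiv.ofBijective f ⟨hinj, hsurj⟩, fun a => rfl, fun a b => ?_⟩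
  have : ((↑a : G ⧸ N) * ↑b) = ((↑(a * b) : G ⧸ N)) := by
    rw [QuotientGroup.mk_mul]
  rw [this]
  show f ↑(a * b) = _
  rw [hf, hcoc a b, QuotientGroup.mk_mul]
end
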